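/- arXiv:0910.1575 — 4 statements merged into one kernel-verified Lean document; each statement's English description precedes it below -/
import Mathlib

section
/- Let n > 2 and e be natural numbers, and suppose that every finite simple graph with n vertices and at most e edges is 2-apex. Then: (1) every finite simple graph with n+1 vertices and at most e+1 edges that has a vertex of degree 1 or degree 2 is 2-apex; and (2) every finite simple graph with n+1 vertices and at most e edges that has a vertex of degree 0 is 2-apex. -/
/-- `H` is a minor of `G`: there are pairwise disjoint nonempty connected branch sets
in `G`, one for each vertex of `H`, with an edge of `G` between the branch sets of
any two vertices adjacent in `H`. -/
def SimpleGraph.IsMinor {W V : Type*} (H : SimpleGraph W) (G : SimpleGraph V) : Prop :=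
  ∃ f : W → Set V,
    (∀ w, (f w).Nonempty) ∧
    (∀ w, (G.induce (f w)).Connected) ∧
    (Pairwise fun w₁ w₂ => Disjoint (f w₁) (f w₂)) ∧
    ∀ ⦃w₁ w₂⦄, H.Adj w₁ w₂ → ∃ v₁ ∈ f w₁, ∃ v₂ ∈ f w₂, G.Adj v₁ v₂

/-- A graph is planar iff it has no `K₅` minor and no `K₃,₃` minor (Kuratowski–Wagner). -/
def SimpleGraph.IsPlanar {V : Type*} (G : SimpleGraph V) : Prop :=
  ¬ (⊤ : SimpleGraph (Fin 5)).IsMinor G ∧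
  ¬ (completeBipartiteGraph (Fin 3) (Fin 3)).IsMinor G

/-- A graph is 2-apex if it becomes planar after deleting at most two vertices. -/
def SimpleGraph.TwoApex {V : Type*} (G : SimpleGraph V) : Prop :=
  ∃ s : Set V, s.ncard ≤ 2 ∧ (G.induce sᶜ).IsPlanar

/-!
Let `v` be a vertex of degree at most two. Deleting `v` and joining its neighbours by an edge
gives a graph `G'` on `n` vertices with at most `e` edges, so `G' - s` is planar for some set `s`
of at most two vertices. The same `s` works for `G`: `K₅` and `K₃,₃` have minimum degree three,
so `{v}` is never a whole branch set of a minor model of either in `G - s`, and removing `v` from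
its branch set, with the new edge replacing the path through `v`, gives a model in `G' - s`.
-/

namespace SimpleGraph

variable {V V' W : Type*}

def IsMinorModel (H : SimpleGraph W) (G : SimpleGraph V) (f : W → Set V) : Prop :=
  (∀ w, (f w).Nonempty) ∧ (∀ w, (G.induce (f w)).Connected) ∧
    (Pairwise fun w₁ w₂ => Disjoint (f w₁) (f w₂)) ∧
    ∀ ⦃w₁ w₂⦄, H.Adj w₁ w₂ → ∃ v₁ ∈ f w₁, ∃ v₂ ∈ f w₂, G.Adj v₁ v₂

theorem IsMinorModel.isMinor_induce {H : SimpleGraph W} {G : SimpleGraph V} {f : W → Set V}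
    {S : Set V} (hf : H.IsMinorModel G f) (hS : ∀ w, f w ⊆ S) : H.IsMinor (G.induce S) := by
  obtain ⟨hne, hconn, hdisj, hadj⟩ := hf
  refine ⟨fun w => Subtype.val ⁻¹' f w, fun w => ?_, fun w => ?_,
    fun w₁ w₂ h => (hdisj h).preimage _, fun w₁ w₂ h => ?_⟩
  · obtain ⟨x, hx⟩ := hne w
    exact ⟨⟨x, hS w hx⟩, hx⟩
  · let φ : G.induce (f w) →g (G.induce S).induce (Subtype.val ⁻¹' f w) :=
      ⟨fun x => ⟨⟨x, hS w x.2⟩, x.2⟩, id⟩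
    exact (hconn w).map φ fun y => ⟨⟨y.1.1, y.2⟩, rfl⟩
  · obtain ⟨x, hx, y, hy, hxy⟩ := hadj h
    exact ⟨⟨x, hS _ hx⟩, hx, ⟨y, hS _ hy⟩, hy, hxy⟩

theorem IsMinor.map {H : SimpleGraph W} {G : SimpleGraph V} {G' : SimpleGraph V'} (φ : G →g G')
    (hφ : Function.Injective φ) (h : H.IsMinor G) : H.IsMinor G' := by
  obtain ⟨f, hne, hconn, hdisj, hadj⟩ := h
  refine ⟨fun w => φ '' f w, fun w => (hne w).image φ, fun w => ?_,
    fun w₁ w₂ h => (Set.disjoint_image_iff hφ).2 (hdisj h), fun w₁ w₂ h => ?_⟩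
  · let ψ : G.induce (f w) →g G'.induce (φ '' f w) :=
      ⟨fun x => ⟨φ x, Set.mem_image_of_mem φ x.2⟩, φ.map_rel⟩
    exact (hconn w).map ψ (by rintro ⟨_, x, hx, rfl⟩; exact ⟨⟨x, hx⟩, rfl⟩)
  · obtain ⟨x, hx, y, hy, hxy⟩ := hadj h
    exact ⟨φ x, Set.mem_image_of_mem φ hx, φ y, Set.mem_image_of_mem φ hy, φ.map_rel hxy⟩

theorem Preconnected.map_of_reachable {G : SimpleGraph V} {G' : SimpleGraph V'} (r : V → V')
    (hr : ∀ x y, G.Adj x y → G'.Reachable (r x) (r y)) (hsurj : Function.Surjective r)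
    (hG : G.Preconnected) : G'.Preconnected := by
  intro a b
  obtain ⟨x, rfl⟩ := hsurj a
  obtain ⟨y, rfl⟩ := hsurj b
  simp only [reachable_iff_reflTransGen] at hr ⊢
  exact Relation.ReflTransGen.lift' r hr _ _ ((reachable_iff_reflTransGen _ _).1 (hG x y))

theorem Connected.induce_diff_singleton {G G' : SimpleGraph V} {S : Set V} {v : V}
    (hle : G ≤ G') (hN : ∀ x y, G.Adj v x → G.Adj v y → x ≠ y → G'.Adj x y)
    (hS : (G.induce S).Connected) (hne : (S \ {v}).Nonempty) :
    (G'.induce (S \ {v})).Connected := by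
  by_cases hvS : v ∉ S
  · rw [Set.sdiff_singleton_eq_self hvS]
    exact hS.mono (comap_monotone _ hle)
  rw [not_not] at hvS
  obtain ⟨y, hyS, hyv⟩ := hne
  obtain ⟨x₀, hvx₀⟩ := (hS.preconnected ⟨v, hvS⟩ ⟨y, hyS⟩).nonempty_neighborSet_left
    fun h => hyv (Set.mem_singleton_iff.2 (congrArg Subtype.val h).symm)
  let x₀' : ↥(S \ {v}) := ⟨x₀.1, x₀.2, hvx₀.ne'⟩
  have : Nonempty ↥(S \ {v}) := ⟨x₀'⟩
  -- `r` contracts the edge `v x₀`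
  classical
  let r : S → ↥(S \ {v}) := fun x => if h : x.1 = v then x₀' else ⟨x.1, x.2, h⟩
  have hx₀_reach : ∀ y : S, G.Adj v y → (G'.induce (S \ {v})).Reachable x₀' (r y) := by
    intro y hvy
    rw [show r y = ⟨y.1, y.2, hvy.ne'⟩ from dif_neg hvy.ne']
    by_cases hy : x₀.1 = y.1
    · rw [show x₀' = ⟨y.1, y.2, hvy.ne'⟩ from Subtype.ext hy]
    · exact Adj.reachable (hN _ _ hvx₀ hvy hy)
  have hr : ∀ x y : S, (G.induce S).Adj x y → (G'.induce (S \ {v})).Reachable (r x) (r y) := by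
    intro x y hxy
    by_cases hx : x.1 = v
    · rw [show r x = x₀' from dif_pos hx]
      exact hx₀_reach y (hx ▸ hxy)
    by_cases hy : y.1 = v
    · rw [show r y = x₀' from dif_pos hy]
      exact (hx₀_reach x (hy ▸ hxy.symm)).symm
    rw [show r x = ⟨x.1, x.2, hx⟩ from dif_neg hx, show r y = ⟨y.1, y.2, hy⟩ from dif_neg hy]
    exact Adj.reachable (hle hxy)
  exact ⟨hS.preconnected.map_of_reachable r hr fun a => ⟨⟨a.1, a.2.1⟩, dif_neg a.2.2⟩⟩

section Dissolve

variable {H : SimpleGraph W} {G G' : SimpleGraph V} {v : V}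

-- The branch sets next to a branch set `{v}` would need more than two distinct neighbours of `v`.
theorem IsMinorModel.ne_singleton {f : W → Set V} (hH : ∀ w, 2 < (H.neighborSet w).encard)
    (hv : (G.neighborSet v).encard ≤ 2) (hf : H.IsMinorModel G f) (w : W) : f w ≠ {v} := by
  obtain ⟨-, -, hdisj, hadj⟩ := hf
  intro hw
  have : ∀ a, ∃ x, H.Adj w a → x ∈ f a ∧ G.Adj v x := by
    intro a
    by_cases ha : H.Adj w a
    · obtain ⟨y, hy, x, hx, hyx⟩ := hadj ha
      rw [hw, Set.mem_singleton_iff] at hy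
      exact ⟨x, fun _ => ⟨hx, hy ▸ hyx⟩⟩
    · exact ⟨v, fun h => (ha h).elim⟩
  choose g hg using this
  have hinj : Set.InjOn g (H.neighborSet w) := fun a ha b hb hab => by
    by_contra hab'
    exact Set.disjoint_left.1 (hdisj hab') (hg a ha).1 (hab ▸ (hg b hb).1)
  exact (hH w).not_ge ((Set.encard_le_encard_of_injOn (fun a ha => (hg a ha).2) hinj).trans hv)

theorem IsMinorModel.dissolve {f : W → Set V} (hH : ∀ w, 2 < (H.neighborSet w).encard)
    (hv : (G.neighborSet v).encard ≤ 2) (hle : G ≤ G')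
    (hN : ∀ x y, G.Adj v x → G.Adj v y → x ≠ y → G'.Adj x y) (hf : H.IsMinorModel G f) :
    H.IsMinorModel G' fun w => f w \ {v} := by
  have hsingleton := hf.ne_singleton hH hv
  obtain ⟨hne, hconn, hdisj, hadj⟩ := hf
  have hne' : ∀ w, (f w \ {v}).Nonempty := fun w => Set.sdiff_nonempty.2 fun hsub =>
    (Set.subset_singleton_iff_eq.1 hsub).elim (hne w).ne_empty (hsingleton w)
  have hnbr : ∀ w, v ∈ f w → ∃ x ∈ f w, G.Adj v x := by
    intro w hvw
    obtain ⟨y, hy, hyv⟩ := hne' w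
    obtain ⟨x, hx⟩ := ((hconn w).preconnected ⟨v, hvw⟩ ⟨y, hy⟩).nonempty_neighborSet_left
      fun h => hyv (Set.mem_singleton_iff.2 (congrArg Subtype.val h).symm)
    exact ⟨x.1, x.2, hx⟩
  have hreroute : ∀ ⦃w₁ w₂⦄, w₁ ≠ w₂ → v ∈ f w₁ → ∀ b ∈ f w₂, G.Adj v b →
      ∃ a ∈ f w₁ \ {v}, G'.Adj a b := by
    intro w₁ w₂ hw hvw b hb hvb
    obtain ⟨a, ha, hva⟩ := hnbr w₁ hvw
    have hab : a ≠ b := fun h => Set.disjoint_left.1 (hdisj hw) ha (h ▸ hb)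
    exact ⟨a, ⟨ha, hva.ne'⟩, hN a b hva hvb hab⟩
  refine ⟨hne', fun w => (hconn w).induce_diff_singleton hle hN (hne' w),
    fun w₁ w₂ h => (hdisj h).mono Set.sdiff_subset Set.sdiff_subset, fun w₁ w₂ h => ?_⟩
  obtain ⟨a, ha, b, hb, hab⟩ := hadj h
  by_cases hav : a = v
  · subst hav
    obtain ⟨x, hx, hxb⟩ := hreroute h.ne ha b hb hab
    exact ⟨x, hx, b, ⟨hb, hab.ne'⟩, hxb⟩
  by_cases hbv : b = v
  · subst hbv
    obtain ⟨x, hx, hxa⟩ := hreroute h.ne.symm hb a ha hab.symm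
    exact ⟨a, ⟨ha, hav⟩, x, hx, hxa.symm⟩
  exact ⟨a, ⟨ha, hav⟩, b, ⟨hb, hbv⟩, hle hab⟩

theorem IsMinor.dissolve (hH : ∀ w, 2 < (H.neighborSet w).encard)
    (hv : (G.neighborSet v).encard ≤ 2) (hle : G ≤ G')
    (hN : ∀ x y, G.Adj v x → G.Adj v y → x ≠ y → G'.Adj x y) (h : H.IsMinor G) :
    H.IsMinor (G'.induce {v}ᶜ) := by
  obtain ⟨f, hf⟩ := h
  exact (IsMinorModel.dissolve hH hv hle hN hf).isMinor_induce fun w x hx => hx.2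

theorem IsMinor.dissolve_induce (hH : ∀ w, 2 < (H.neighborSet w).encard)
    (hv : (G.neighborSet v).encard ≤ 2) (hle : G ≤ G')
    (hN : ∀ x y, G.Adj v x → G.Adj v y → x ≠ y → G'.Adj x y) (s : Set ({v}ᶜ : Set V))
    (h : H.IsMinor (G.induce (Subtype.val '' s)ᶜ)) : H.IsMinor ((G'.induce {v}ᶜ).induce sᶜ) := by
  set T := (Subtype.val '' s)ᶜ
  have hvT : v ∈ T := fun ⟨x, _, hx⟩ => x.2 hx
  have hv' : ((G.induce T).neighborSet ⟨v, hvT⟩).encard ≤ 2 :=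
    calc _ = (Subtype.val '' (G.induce T).neighborSet ⟨v, hvT⟩).encard :=
          (Subtype.val_injective.injOn.encard_image).symm
      _ ≤ (G.neighborSet v).encard := Set.encard_le_encard (by rintro _ ⟨x, hx, rfl⟩; exact hx)
      _ ≤ 2 := hv
  have hT := h.dissolve hH hv' (comap_monotone _ hle)
    fun x y hx hy hxy => hN x y hx hy (Subtype.coe_ne_coe.2 hxy)
  let φ : (G'.induce T).induce {⟨v, hvT⟩}ᶜ →g (G'.induce {v}ᶜ).induce sᶜ :=
    ⟨fun x => ⟨⟨x.1.1, fun h => x.2 (Subtype.ext h)⟩, fun hx => x.1.2 ⟨_, hx, rfl⟩⟩, id⟩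
  exact hT.map φ fun x y hxy => Subtype.ext (Subtype.ext (congrArg (fun z => z.1.1) hxy))

theorem two_lt_encard_neighborSet_top (w : Fin 5) :
    2 < ((⊤ : SimpleGraph (Fin 5)).neighborSet w).encard := by
  norm_num [Set.encard_eq_coe_toFinset_card, Finset.card_compl]

theorem two_lt_encard_neighborSet_completeBipartiteGraph (w : Fin 3 ⊕ Fin 3) :
    2 < ((completeBipartiteGraph (Fin 3) (Fin 3)).neighborSet w).encard := by
  rcases w with i | i <;> simp [neighborSet, Set.encard_eq_coe_toFinset_card] <;> decide

theorem TwoApex.of_dissolve (hv : (G.neighborSet v).encard ≤ 2) (hle : G ≤ G')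
    (hN : ∀ x y, G.Adj v x → G.Adj v y → x ≠ y → G'.Adj x y)
    (h : (G'.induce {v}ᶜ).TwoApex) : G.TwoApex := by
  obtain ⟨s, hs, hK₅, hK₃₃⟩ := h
  refine ⟨Subtype.val '' s, (Set.ncard_image_of_injective _ Subtype.val_injective).trans_le hs,
    fun hK => hK₅ ?_, fun hK => hK₃₃ ?_⟩
  · exact hK.dissolve_induce two_lt_encard_neighborSet_top hv hle hN s
  · exact hK.dissolve_induce two_lt_encard_neighborSet_completeBipartiteGraph hv hle hN s

end Dissolve

theorem ncard_edgeSet_induce_compl_singleton_add_ncard_neighborSet [Finite V]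
    (G : SimpleGraph V) (v : V) :
    (G.induce {v}ᶜ).edgeSet.ncard + (G.neighborSet v).ncard = G.edgeSet.ncard := by
  classical
  have := Fintype.ofFinite V
  rw [Set.ncard_eq_toFinset_card', Set.ncard_eq_toFinset_card', Set.ncard_eq_toFinset_card']
  have h₁ := G.card_edgeFinset_induce_compl_singleton v
  have h₂ := G.card_edgeFinset_deleteIncidenceSet v
  have h₃ := G.degree_le_card_edgeFinset v
  simp only [edgeFinset, ← card_neighborFinset_eq_degree, neighborFinset] at h₁ h₂ h₃
  omega

theorem ncard_edgeSet_induce_compl_singleton_sup_add_le [Finite V] (G G₂ : SimpleGraph V) (v : V) :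
    ((G ⊔ G₂).induce {v}ᶜ).edgeSet.ncard + (G.neighborSet v).ncard ≤
      G.edgeSet.ncard + G₂.edgeSet.ncard := by
  have h := ncard_edgeSet_induce_compl_singleton_add_ncard_neighborSet (G ⊔ G₂) v
  have hdeg := Set.ncard_le_ncard (neighborSet_mono (le_sup_left : G ≤ G ⊔ G₂) v)
  have hE : (G ⊔ G₂).edgeSet.ncard ≤ G.edgeSet.ncard + G₂.edgeSet.ncard := by
    rw [edgeSet_sup]
    exact Set.ncard_union_le _ _
  omega

-- `edge u u = ⊥`, so `u₁ = u₂` covers the vertices of degree at most one.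
theorem TwoApex.of_neighborSet_subset_pair {n e : ℕ}
    (H : ∀ (V : Type) [Fintype V] (G : SimpleGraph V),
      Fintype.card V = n → G.edgeSet.ncard ≤ e → G.TwoApex)
    {V : Type} [Fintype V] {G : SimpleGraph V} {v u₁ u₂ : V} (hV : Fintype.card V = n + 1)
    (hv : G.neighborSet v ⊆ {u₁, u₂})
    (hE : G.edgeSet.ncard + (edge u₁ u₂).edgeSet.ncard ≤ e + (G.neighborSet v).ncard) :
    G.TwoApex := by
  classical
  refine TwoApex.of_dissolve (v := v) (G' := G ⊔ edge u₁ u₂) ?_ le_sup_left ?_ (H _ _ ?_ ?_)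
  · calc (G.neighborSet v).encard ≤ ({u₁, u₂} : Set V).encard := Set.encard_le_encard hv
      _ ≤ ({u₂} : Set V).encard + 1 := Set.encard_insert_le _ _
      _ = 2 := by norm_num
  · intro x y hx hy hxy
    refine Or.inr ((edge_adj _ _ _ _).2 ⟨?_, hxy⟩)
    rcases hv hx with rfl | rfl <;> rcases hv hy with rfl | rfl <;> simp_all
  · rw [Fintype.card_compl_set, hV, Fintype.card_unique, Nat.add_sub_cancel]
  · have := ncard_edgeSet_induce_compl_singleton_sup_add_le G (edge u₁ u₂) v
    omega

end SimpleGraph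

open SimpleGraph in
theorem stmt7_general (n e : ℕ)
    (H : ∀ (V : Type) [Fintype V] (G : SimpleGraph V),
      Fintype.card V = n → G.edgeSet.ncard ≤ e → G.TwoApex) :
    (∀ (V : Type) [Fintype V] (G : SimpleGraph V),
      Fintype.card V = n + 1 → G.edgeSet.ncard ≤ e + 1 →
      (∃ v : V, (G.neighborSet v).ncard = 1 ∨ (G.neighborSet v).ncard = 2) →
      G.TwoApex) ∧
    (∀ (V : Type) [Fintype V] (G : SimpleGraph V),
      Fintype.card V = n + 1 → G.edgeSet.ncard ≤ e →
      (∃ v : V, (G.neighborSet v).ncard = 0) →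
      G.TwoApex) := by
  refine ⟨?_, ?_⟩
  · rintro V _ G hV hE ⟨v, hv | hv⟩
    · obtain ⟨u, hu⟩ := Set.ncard_eq_one.mp hv
      refine TwoApex.of_neighborSet_subset_pair H (v := v) (u₁ := u) (u₂ := u) hV
        (by rw [hu, Set.pair_eq_singleton]) ?_
      rw [edge_self_eq_bot, edgeSet_bot, Set.ncard_empty, hv]
      omega
    · obtain ⟨u₁, u₂, -, hu⟩ := Set.ncard_eq_two.mp hv
      refine TwoApex.of_neighborSet_subset_pair H hV hu.subset ?_
      have : (edge u₁ u₂).edgeSet.ncard ≤ 1 :=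
        (Set.ncard_le_ncard edgeSet_edge_subset).trans (Set.ncard_singleton _).le
      omega
  · rintro V _ G hV hE ⟨v, hv⟩
    refine TwoApex.of_neighborSet_subset_pair H (v := v) (u₁ := v) (u₂ := v) hV ?_ ?_
    · rw [(Set.ncard_eq_zero (Set.toFinite _)).mp hv]
      exact Set.empty_subset _
    · rw [edge_self_eq_bot, edgeSet_bot, Set.ncard_empty]
      omega

/-- If every graph with `n > 2` vertices and at most `e` edges is 2-apex, then
(1) every graph with `n+1` vertices, at most `e+1` edges and a vertex of degree 1 or 2
is 2-apex, and (2) every graph with `n+1` vertices, at most `e` edges and a vertex of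
degree 0 is 2-apex. -/
theorem stmt7 (n e : ℕ) (hn : 2 < n)
    (H : ∀ (V : Type) [Fintype V] (G : SimpleGraph V),
      Fintype.card V = n → G.edgeSet.ncard ≤ e → G.TwoApex) :
    (∀ (V : Type) [Fintype V] (G : SimpleGraph V),
      Fintype.card V = n + 1 → G.edgeSet.ncard ≤ e + 1 →
      (∃ v : V, (G.neighborSet v).ncard = 1 ∨ (G.neighborSet v).ncard = 2) →
      G.TwoApex) ∧
    (∀ (V : Type) [Fintype V] (G : SimpleGraph V),
      Fintype.card V = n + 1 → G.edgeSet.ncard ≤ e →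
      (∃ v : V, (G.neighborSet v).ncard = 0) →
      G.TwoApex) :=
  stmt7_general n e H
end

section
/- Every connected non-planar finite simple graph G on at least 6 vertices has at least |G| + 3 edges, where |G| denotes the number of vertices of G. -/
namespace SimpleGraph

variable {V W : Type*} {G : SimpleGraph V} {H : SimpleGraph W}

/-- The clauses of `IsMinor` for a fixed family of branch sets; nonemptiness follows from
`connected`. -/
structure IsMinorModel_s9 (H : SimpleGraph W) (G : SimpleGraph V) (f : W → Set V) : Prop where
  connected (w : W) : (G.induce (f w)).Connected
  disjoint : Pairwise fun w₁ w₂ => Disjoint (f w₁) (f w₂)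
  adj ⦃w₁ w₂ : W⦄ : H.Adj w₁ w₂ → ∃ v₁ ∈ f w₁, ∃ v₂ ∈ f w₂, G.Adj v₁ v₂

lemma IsMinorModel_s9.update_insert [DecidableEq W] {f : W → Set V} (hf : H.IsMinorModel_s9 G f)
    {w : W} {a b : V} (ha : a ∈ f w) (hab : G.Adj a b) (hb : ∀ w', b ∉ f w') :
    H.IsMinorModel_s9 G (Function.update f w (insert b (f w))) where
  connected w' := by
    rcases eq_or_ne w' w with rfl | hw
    · rw [Function.update_self, ← Set.singleton_union]
      exact connected_induce_union (by simp [induce_singleton_eq_top])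
        (hf.connected w').preconnected rfl ha hab.symm
    · rw [Function.update_of_ne hw]
      exact hf.connected w'
  disjoint w₁ w₂ hne := by
    simp only [Function.update_apply]
    split_ifs with h₁ h₂ h₂
    · exact absurd (h₁.trans h₂.symm) hne
    · subst h₁; exact Set.disjoint_insert_left.mpr ⟨hb w₂, hf.disjoint hne⟩
    · subst h₂; exact Set.disjoint_insert_right.mpr ⟨hb w₁, hf.disjoint hne⟩
    · exact hf.disjoint hne
  adj w₁ w₂ h := by
    have hle : f ≤ Function.update f w (insert b (f w)) :=
      le_update_self_iff.mpr (Set.subset_insert b (f w))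
    obtain ⟨v₁, h₁, v₂, h₂, hv⟩ := hf.adj h
    exact ⟨v₁, hle w₁ h₁, v₂, hle w₂ h₂, hv⟩

lemma IsMinor.exists_isMinorModel_forall_mem [Finite V] [Finite W] [Nonempty W]
    (hG : G.Connected) (h : H.IsMinor G) : ∃ g, H.IsMinorModel_s9 G g ∧ ∀ v, ∃ w, v ∈ g w := by
  classical
  obtain ⟨f, -, hconn, hdisj, hadj⟩ := h
  obtain ⟨g, hg, hmax⟩ :=
    (Set.toFinite {g | H.IsMinorModel_s9 G g}).exists_maximal ⟨f, hconn, hdisj, hadj⟩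
  refine ⟨g, hg, fun y => ?_⟩
  by_contra! hy
  obtain ⟨x, hx⟩ := (hg.connected (Classical.arbitrary W)).nonempty
  obtain ⟨d, -, hd₁, hd₂⟩ := (hG.preconnected x y).some.exists_boundary_dart (⋃ w, g w)
    (Set.mem_iUnion_of_mem _ hx) (by simpa using hy)
  obtain ⟨w, hw⟩ := Set.mem_iUnion.mp hd₁
  have hb : ∀ w', d.snd ∉ g w' := by simpa using hd₂
  have hle : g ≤ Function.update g w (insert d.snd (g w)) :=
    le_update_self_iff.mpr (Set.subset_insert _ _)
  exact hb w (hmax (hg.update_insert hw d.adj hb) hle w (by simp))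

section Fibers

open Finset

variable [Fintype V] [DecidableRel G.Adj] [DecidableEq W]

lemma card_fiber_le_card_filter_map_eq_diag_add_one [DecidableEq V] (π : V → W) (w : W)
    (hconn : (G.induce (π ⁻¹' {w})).Connected) :
    #{v | π v = w} ≤ #{e ∈ G.edgeFinset | e.map π = Sym2.diag w} + 1 := by
  have hfiber : π ⁻¹' {w} = ↑({v | π v = w} : Finset V) := by ext; simp
  rw [hfiber] at hconn
  have := hconn.card_vert_le_card_edgeSet_add_one
  rw [Nat.card_eq_fintype_card, Nat.card_eq_fintype_card, ← edgeFinset_card,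
    ← card_filter_edgeFinset_toFinset_subset] at this
  simp only [coe_sort_coe, Fintype.card_coe] at this
  convert this using 3
  refine filter_congr fun e _ => ?_
  induction e using Sym2.ind
  simp [Sym2.diag, Sym2.toFinset_mk_eq, insert_subset_iff]

lemma sum_card_filter_map_eq_diag_add_card_edgeFinset_le [Fintype W] [DecidableRel H.Adj]
    (π : V → W) (hH : H.edgeSet ⊆ Sym2.map π '' G.edgeSet) :
    ∑ w, #{e ∈ G.edgeFinset | e.map π = Sym2.diag w} + #H.edgeFinset ≤ #G.edgeFinset := by
  set F : Sym2 W → ℕ := fun z => #{e ∈ G.edgeFinset | e.map π = z}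
  have hdisj : Disjoint (univ.image Sym2.diag) H.edgeFinset := by
    refine Finset.disjoint_left.mpr ?_
    simp only [mem_image, mem_univ, true_and, mem_edgeFinset]
    rintro _ ⟨w, rfl⟩ h
    exact not_isDiag_of_mem_edgeSet H h (Sym2.diag_isDiag w)
  have hH_le : #H.edgeFinset ≤ ∑ z ∈ H.edgeFinset, F z := by
    rw [card_eq_sum_ones]
    refine sum_le_sum fun z hz => card_pos.mpr ?_
    obtain ⟨e, he, rfl⟩ := hH (mem_edgeFinset.mp hz)
    exact ⟨e, by simpa using he⟩
  calc ∑ w, F (Sym2.diag w) + #H.edgeFinset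
      ≤ ∑ z ∈ univ.image Sym2.diag, F z + ∑ z ∈ H.edgeFinset, F z := by
        rw [sum_image fun _ _ _ _ h => Sym2.diag_injective h]
        gcongr
    _ = ∑ z ∈ univ.image Sym2.diag ∪ H.edgeFinset, F z := (sum_union hdisj).symm
    _ ≤ ∑ z, F z := sum_le_sum_of_subset (subset_univ _)
    _ = #G.edgeFinset := (card_eq_sum_card_fiberwise fun _ _ => mem_univ _).symm

end Fibers

open Finset in
theorem card_add_ncard_edgeSet_le_of_connected_fibers [Finite V] [Finite W] (π : V → W)
    (hπ : ∀ w, (G.induce (π ⁻¹' {w})).Connected)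
    (hH : H.edgeSet ⊆ Sym2.map π '' G.edgeSet) :
    Nat.card V + H.edgeSet.ncard ≤ G.edgeSet.ncard + Nat.card W := by
  classical
  have := Fintype.ofFinite V
  have := Fintype.ofFinite W
  have hV : #(univ : Finset V) = ∑ w, #{v | π v = w} :=
    card_eq_sum_card_fiberwise fun _ _ => mem_univ _
  rw [← coe_edgeFinset, Set.ncard_coe_finset, ← coe_edgeFinset, Set.ncard_coe_finset,
    Nat.card_eq_fintype_card, Nat.card_eq_fintype_card, ← card_univ, hV]
  calc ∑ w, #{v | π v = w} + #H.edgeFinset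
      ≤ ∑ w, (#{e ∈ G.edgeFinset | e.map π = Sym2.diag w} + 1) + #H.edgeFinset := by
        gcongr with w
        exact card_fiber_le_card_filter_map_eq_diag_add_one π w (hπ w)
    _ ≤ #G.edgeFinset + Fintype.card W := by
        have := sum_card_filter_map_eq_diag_add_card_edgeFinset_le π hH
        rw [sum_add_distrib, sum_const, card_univ, smul_eq_mul, mul_one]
        omega

theorem IsMinor.card_add_ncard_edgeSet_le [Finite V] [Finite W] [Nonempty W]
    (hG : G.Connected) (h : H.IsMinor G) :
    Nat.card V + H.edgeSet.ncard ≤ G.edgeSet.ncard + Nat.card W := by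
  obtain ⟨g, hg, hcover⟩ := h.exists_isMinorModel_forall_mem hG
  choose π hπ using hcover
  have hπ_eq_iff (v : V) (w : W) : π v = w ↔ v ∈ g w := by
    refine ⟨fun hv => hv ▸ hπ v, fun hv => ?_⟩
    by_contra hne
    exact Set.disjoint_left.mp (hg.disjoint hne) (hπ v) hv
  have hfiber (w : W) : π ⁻¹' {w} = g w := Set.ext fun v => hπ_eq_iff v w
  refine card_add_ncard_edgeSet_le_of_connected_fibers π (fun w => hfiber w ▸ hg.connected w) ?_
  intro e he
  induction e using Sym2.ind with | _ w₁ w₂ => ?_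
  obtain ⟨v₁, h₁, v₂, h₂, hv⟩ := hg.adj he
  exact ⟨s(v₁, v₂), hv, by simp [(hπ_eq_iff v₁ w₁).mpr h₁, (hπ_eq_iff v₂ w₂).mpr h₂]⟩

lemma ncard_edgeSet_top [Finite V] :
    (⊤ : SimpleGraph V).edgeSet.ncard = (Nat.card V).choose 2 := by
  classical
  have := Fintype.ofFinite V
  rw [← coe_edgeFinset, Set.ncard_coe_finset, card_edgeFinset_top_eq_card_choose_two,
    Nat.card_eq_fintype_card]

lemma ncard_edgeSet_completeBipartiteGraph [Finite V] [Finite W] :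
    (completeBipartiteGraph V W).edgeSet.ncard = Nat.card V * Nat.card W := by
  simp [Set.ncard_def, encard_edgeSet_completeBipartiteGraph, ENat.card_eq_coe_natCard]

end SimpleGraph

open SimpleGraph in
theorem stmt9_general {V : Type*} [Fintype V] (G : SimpleGraph V)
    (hc : G.Connected) (hnp : ¬ G.IsPlanar) :
    Fintype.card V + 3 ≤ G.edgeSet.ncard := by
  rcases not_and_or.mp hnp with hK₅ | hK₃₃
  · have := (not_not.mp hK₅).card_add_ncard_edgeSet_le hc
    rw [ncard_edgeSet_top, Nat.card_fin, Nat.card_eq_fintype_card] at this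
    norm_num [Nat.choose_two_right] at this
    omega
  · have := (not_not.mp hK₃₃).card_add_ncard_edgeSet_le hc
    rw [ncard_edgeSet_completeBipartiteGraph, Nat.card_sum, Nat.card_fin,
      Nat.card_eq_fintype_card] at this
    omega

/-- A connected non-planar graph on at least 6 vertices has at least `|G| + 3` edges. -/
theorem stmt9 {V : Type*} [Fintype V] (G : SimpleGraph V)
    (h6 : 6 ≤ Fintype.card V) (hc : G.Connected) (hnp : ¬ G.IsPlanar) :
    Fintype.card V + 3 ≤ G.edgeSet.ncard :=
  stmt9_general G hc hnp
end

section
/- Let G be a finite simple graph with 9 vertices and 21 edges whose minimum degree is at least 3. Suppose that for every pair of distinct vertices a′, b′ the induced subgraph G − {a′,b′} has at least 11 edges, and that equality holds for at least one such pair. Then there exist distinct vertices a and b such that G − {a,b} has exactly 11 edges, the minimum degree of G − {a,b} is at least 2, and one of the following holds: (i) a has degree 6 and b has degree 5, the degree sequence of G is {6,5,5,5,5,5,5,3,3}, {6,5,5,5,5,5,4,4,3}, or {6,5,5,5,5,4,4,4,4}, and a is adjacent to every vertex of degree 5 (including b); or (ii) a and b both have degree 5 and are not adjacent, and the degree sequence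 of G is {5,5,5,5,5,5,5,4,3} or {5,5,5,5,5,5,4,4,4}. -/
/-!
Removing two vertices `a ≠ b` leaves `21 - d a - d b + [a ~ b]` edges, so the hypothesis reads
`d a + d b ≤ 10 + [a ~ b]` for every pair. Summing this over the partners of a vertex `v` and
using `∑ d = 42` gives `6 d v ≤ 38`, so all degrees lie in `{3, 4, 5, 6}`, and the two equations
"9 vertices, degree sum 42" leave only the listed degree sequences.

If some `a` has degree 6, it is the only one and it is adjacent to every vertex of degree 5; at most
one degree-3 vertex is adjacent to `a`, and it misses some degree-5 vertex `b`. Otherwise the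
extremal pair consists of two non-adjacent degree-5 vertices; it works unless a degree-3 vertex `x`
exists, in which case `x` is unique, seven vertices have degree 5, and a degree-5 vertex `u` not
adjacent to `x` has three non-neighbours, at most two of which have degree other than 5. In both
cases no degree-3 vertex sees both `a` and `b`, so `G - {a, b}` has minimum degree at least 2.
-/

open Finset SimpleGraph

namespace SimpleGraph

variable {V : Type*}

theorem ncard_neighborSet_eq_degree (G : SimpleGraph V) (v : V) [Fintype (G.neighborSet v)] :
    (G.neighborSet v).ncard = G.degree v := by
  rw [Set.ncard_eq_toFinset_card', Set.toFinset_card, card_neighborSet_eq_degree]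

variable [Fintype V] {G : SimpleGraph V} [DecidableRel G.Adj]

theorem ncard_edgeSet_eq_card_edgeFinset : G.edgeSet.ncard = #G.edgeFinset := by
  rw [← coe_edgeFinset, Set.ncard_coe_finset]

section DeletePair

variable [DecidableEq V]

theorem edgeFinset_inter_sym2_compl_pair (a b : V) :
    G.edgeFinset ∩ (({a, b} : Set V)ᶜ).toFinset.sym2 =
      G.edgeFinset \ (G.incidenceFinset a ∪ G.incidenceFinset b) := by
  ext ⟨x, y⟩
  aesop (add simp mk'_mem_incidenceSet_iff)

theorem ncard_edgeSet_induce_compl_pair_add {a b : V} (hab : a ≠ b) :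
    (G.induce ({a, b} : Set V)ᶜ).edgeSet.ncard + G.degree a + G.degree b =
      #G.edgeFinset + if G.Adj a b then 1 else 0 := by
  have hind : (G.induce ({a, b} : Set V)ᶜ).edgeSet.ncard =
      #(G.edgeFinset \ (G.incidenceFinset a ∪ G.incidenceFinset b)) := by
    rw [ncard_edgeSet_eq_card_edgeFinset, ← edgeFinset_inter_sym2_compl_pair,
      ← map_edgeFinset_induce, card_map]
  have hsplit :=
    card_sdiff_add_card_inter G.edgeFinset (G.incidenceFinset a ∪ G.incidenceFinset b)
  rw [inter_eq_right.mpr (union_subset (G.incidenceFinset_subset a) (G.incidenceFinset_subset b))]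
    at hsplit
  have hunion := card_union_add_card_inter (G.incidenceFinset a) (G.incidenceFinset b)
  have hinter : #(G.incidenceFinset a ∩ G.incidenceFinset b) = if G.Adj a b then 1 else 0 := by
    split_ifs with h
    · refine card_eq_one.mpr ⟨s(a, b), coe_inj.mp ?_⟩
      push_cast
      exact G.incidenceSet_inter_incidenceSet_of_adj h
    · rw [card_eq_zero, ← coe_inj]
      push_cast
      exact G.incidenceSet_inter_incidenceSet_of_not_adj h hab
  simp only [card_incidenceFinset_eq_degree] at hunion
  omega

theorem card_neighborFinset_inter_pair {a b : V} (hab : a ≠ b) (v : V) :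
    #(G.neighborFinset v ∩ {a, b}) =
      (if G.Adj v a then 1 else 0) + if G.Adj v b then 1 else 0 := by
  rw [neighborFinset_eq_filter, filter_inter, univ_inter, card_filter, sum_pair hab]

theorem degree_induce_compl_pair_add {a b : V} (hab : a ≠ b) (v : (({a, b} : Set V)ᶜ : Set V)) :
    (G.induce ({a, b} : Set V)ᶜ).degree v + (if G.Adj v a then 1 else 0) +
      (if G.Adj v b then 1 else 0) = G.degree v := by
  rw [← card_neighborFinset_eq_degree, ← card_map, map_neighborFinset_induce, add_assoc,
    ← card_neighborFinset_inter_pair hab, ← card_neighborFinset_eq_degree]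
  convert card_sdiff_add_card_inter (G.neighborFinset v) {a, b} using 3
  ext; simp

theorem two_le_degree_induce_compl_pair {a b : V} (hab : a ≠ b) (hmin : ∀ v, 3 ≤ G.degree v)
    (h3 : ∀ v, G.degree v = 3 → ¬ (G.Adj v a ∧ G.Adj v b))
    (v : (({a, b} : Set V)ᶜ : Set V)) :
    2 ≤ (G.induce ({a, b} : Set V)ᶜ).degree v := by
  have hsplit := degree_induce_compl_pair_add (G := G) hab v
  have hv := hmin v
  split_ifs at hsplit with ha hb
  · have := hv.lt_of_ne' fun h => h3 v h ⟨ha, hb⟩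
    omega
  all_goals omega

end DeletePair

theorem card_sub_one_mul_degree_add_sum_degrees_le {k : ℕ}
    (h : ∀ a b, a ≠ b → G.degree a + G.degree b ≤ k + if G.Adj a b then 1 else 0) (v : V) :
    (Fintype.card V - 1) * G.degree v + ∑ u, G.degree u ≤
      (Fintype.card V - 1) * k + 2 * G.degree v := by
  classical
  have hsum := sum_le_sum fun u (hu : u ∈ univ.erase v) => h v u (ne_of_mem_erase hu).symm
  have hadj : ∑ u ∈ univ.erase v, (if G.Adj v u then 1 else 0) = G.degree v := by
    rw [sum_erase _ (by simp), sum_boole, ← neighborFinset_eq_filter,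
      card_neighborFinset_eq_degree]
    rfl
  rw [sum_add_distrib, sum_add_distrib, sum_const, sum_const, card_erase_of_mem (mem_univ v),
    card_univ, smul_eq_mul, smul_eq_mul, hadj] at hsum
  have := add_sum_erase univ (fun u => G.degree u) (mem_univ v)
  omega

theorem exists_mem_forall_not_adj_of_sum_degree_lt [DecidableEq V] {T F : Finset V}
    (h : ∑ t ∈ T, G.degree t < #F) : ∃ b ∈ F, ∀ t ∈ T, ¬ G.Adj t b := by
  have hcard : #(T.biUnion fun t => G.neighborFinset t) < #F :=
    card_biUnion_le.trans_lt (by simpa only [card_neighborFinset_eq_degree] using h)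
  obtain ⟨b, hbF, hbT⟩ := exists_mem_notMem_of_card_lt_card hcard
  exact ⟨b, hbF, fun t ht hadj =>
    hbT (mem_biUnion.mpr ⟨t, ht, (mem_neighborFinset ..).mpr hadj⟩)⟩

variable (G) in
def degreeCount (k : ℕ) : ℕ := #{v | G.degree v = k}

theorem sum_degreeCount_eq_card {t : Finset ℕ} (ht : ∀ v, G.degree v ∈ t) :
    ∑ k ∈ t, G.degreeCount k = Fintype.card V :=
  (card_eq_sum_card_fiberwise fun v _ => ht v).symm

theorem sum_mul_degreeCount_eq_sum_degree {t : Finset ℕ} (ht : ∀ v, G.degree v ∈ t) :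
    ∑ k ∈ t, k * G.degreeCount k = ∑ v, G.degree v := by
  rw [← sum_fiberwise_of_maps_to fun v _ => ht v]
  refine sum_congr rfl fun k _ => ?_
  rw [sum_congr rfl fun v hv => (mem_filter.mp hv).2, sum_const, smul_eq_mul, mul_comm]
  rfl

theorem map_degree_univ_eq_sum_replicate {t : Finset ℕ} (ht : ∀ v, G.degree v ∈ t) :
    univ.val.map (fun v => G.degree v) = ∑ k ∈ t, Multiset.replicate (G.degreeCount k) k := by
  ext k
  rw [Multiset.count_map, Multiset.count_sum']
  simp only [Multiset.count_replicate]
  rw [sum_ite_eq']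
  split_ifs with hk
  · simp only [degreeCount, eq_comm]
    rfl
  · rw [Multiset.card_eq_zero, Multiset.filter_eq_nil]
    rintro v - rfl
    exact hk (ht v)

theorem degreeCount_three_to_six_eqs (hV : Fintype.card V = 9) (hsum : ∑ v, G.degree v = 42)
    (hdeg : ∀ v, G.degree v ∈ ({3, 4, 5, 6} : Finset ℕ)) :
    G.degreeCount 3 + G.degreeCount 4 + G.degreeCount 5 + G.degreeCount 6 = 9 ∧
      3 * G.degreeCount 3 + 4 * G.degreeCount 4 + 5 * G.degreeCount 5 +
        6 * G.degreeCount 6 = 42 := by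
  have h9 := sum_degreeCount_eq_card hdeg
  have h42 := sum_mul_degreeCount_eq_sum_degree hdeg
  rw [sum_insert (by decide), sum_insert (by decide), sum_insert (by decide), sum_singleton]
    at h9 h42
  omega

theorem map_degree_univ_eq_replicate_three_to_six
    (hdeg : ∀ v, G.degree v ∈ ({3, 4, 5, 6} : Finset ℕ)) :
    univ.val.map (fun v => G.degree v) =
      Multiset.replicate (G.degreeCount 3) 3 + (Multiset.replicate (G.degreeCount 4) 4 +
        (Multiset.replicate (G.degreeCount 5) 5 + Multiset.replicate (G.degreeCount 6) 6)) := by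
  rw [map_degree_univ_eq_sum_replicate hdeg, sum_insert (by decide), sum_insert (by decide),
    sum_insert (by decide), sum_singleton]

theorem adj_of_degree_eq_six_of_degree_eq_five
    (hpair : ∀ a b, a ≠ b → G.degree a + G.degree b ≤ 10 + if G.Adj a b then 1 else 0)
    {a v : V} (ha : G.degree a = 6) (hv : G.degree v = 5) : G.Adj a v := by
  by_contra h
  have := hpair a v (by rintro rfl; omega)
  rw [if_neg h] at this
  omega

theorem exists_adj_of_degree_eq_six [DecidableEq V] (hV : Fintype.card V = 9)
    (hsum : ∑ v, G.degree v = 42) (hdeg : ∀ v, G.degree v ∈ ({3, 4, 5, 6} : Finset ℕ))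
    (hpair : ∀ a b, a ≠ b → G.degree a + G.degree b ≤ 10 + if G.Adj a b then 1 else 0)
    {a : V} (ha : G.degree a = 6) :
    ∃ b, G.degree b = 5 ∧ G.Adj a b ∧
      (∀ v, G.degree v = 3 → ¬ (G.Adj v a ∧ G.Adj v b)) ∧
      univ.val.map (fun v => G.degree v) ∈
        [({6,5,5,5,5,5,5,3,3} : Multiset ℕ), {6,5,5,5,5,5,4,4,3}, {6,5,5,5,5,4,4,4,4}] := by
  have hadj5 : ∀ v, G.degree v = 5 → G.Adj a v :=
    fun v => adj_of_degree_eq_six_of_degree_eq_five hpair ha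
  have hn6 : G.degreeCount 6 = 1 := by
    rw [degreeCount, card_eq_one]
    refine ⟨a, eq_singleton_iff_unique_mem.mpr ⟨by simpa using ha, fun u hu => ?_⟩⟩
    by_contra hua
    have := hpair u a hua
    rw [mem_filter] at hu
    split_ifs at this <;> omega
  set F : Finset V := {v | G.degree v = 5}
  set T : Finset V := {v ∈ G.neighborFinset a | G.degree v = 3}
  have hdisj : Disjoint T F := by
    refine Finset.disjoint_left.mpr fun v hvT hvF => ?_
    have := (mem_filter.mp hvT).2
    have := (mem_filter.mp hvF).2
    omega
  have hTF : #T + #F ≤ 6 :=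
    calc #T + #F = #(T ∪ F) := (card_union_of_disjoint hdisj).symm
      _ ≤ #(G.neighborFinset a) :=
          card_le_card (union_subset (filter_subset _ _)
            fun v hv => (mem_neighborFinset ..).mpr (hadj5 v (mem_filter.mp hv).2))
      _ = 6 := by rw [card_neighborFinset_eq_degree, ha]
  have hT3 : #T ≤ G.degreeCount 3 := card_le_card (filter_subset_filter _ (subset_univ _))
  have hF : #F = G.degreeCount 5 := rfl
  have hsumT : ∑ t ∈ T, G.degree t = #T * 3 := sum_const_nat fun t ht => (mem_filter.mp ht).2
  obtain ⟨h9, h42⟩ := degreeCount_three_to_six_eqs hV hsum hdeg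
  obtain ⟨b, hbF, hbT⟩ :=
    exists_mem_forall_not_adj_of_sum_degree_lt (G := G) (T := T) (F := F) (by omega)
  have hb : G.degree b = 5 := (mem_filter.mp hbF).2
  refine ⟨b, hb, hadj5 b hb, fun v hv ⟨hva, hvb⟩ =>
    hbT v (mem_filter.mpr ⟨(mem_neighborFinset ..).mpr hva.symm, hv⟩) hvb, ?_⟩
  rw [map_degree_univ_eq_replicate_three_to_six hdeg, hn6]
  obtain ⟨h3, h4, h5⟩ | ⟨h3, h4, h5⟩ | ⟨h3, h4, h5⟩ :
      (G.degreeCount 3 = 2 ∧ G.degreeCount 4 = 0 ∧ G.degreeCount 5 = 6) ∨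
      (G.degreeCount 3 = 1 ∧ G.degreeCount 4 = 2 ∧ G.degreeCount 5 = 5) ∨
      (G.degreeCount 3 = 0 ∧ G.degreeCount 4 = 4 ∧ G.degreeCount 5 = 4) := by omega
  all_goals rw [h3, h4, h5]; decide

theorem exists_not_adj_of_forall_degree_ne_six [DecidableEq V] (hV : Fintype.card V = 9)
    (hsum : ∑ v, G.degree v = 42) (hdeg : ∀ v, G.degree v ∈ ({3, 4, 5, 6} : Finset ℕ))
    (h6 : ∀ v, G.degree v ≠ 6)
    (heq : ∃ a b, a ≠ b ∧ G.degree a + G.degree b = 10 + if G.Adj a b then 1 else 0) :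
    ∃ a b, a ≠ b ∧ G.degree a = 5 ∧ G.degree b = 5 ∧ ¬ G.Adj a b ∧
      (∀ v, G.degree v = 3 → ¬ (G.Adj v a ∧ G.Adj v b)) ∧
      univ.val.map (fun v => G.degree v) ∈
        [({5,5,5,5,5,5,5,4,3} : Multiset ℕ), {5,5,5,5,5,5,4,4,4}] := by
  have hn6 : G.degreeCount 6 = 0 := card_eq_zero.mpr (filter_eq_empty_iff.mpr fun v _ => h6 v)
  have hle5 : ∀ v, G.degree v ≤ 5 := fun v => by
    have hv := hdeg v
    simp only [mem_insert, mem_singleton] at hv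
    have := h6 v
    omega
  obtain ⟨h9, h42⟩ := degreeCount_three_to_six_eqs hV hsum hdeg
  have hseq : univ.val.map (fun v => G.degree v) ∈
      [({5,5,5,5,5,5,5,4,3} : Multiset ℕ), {5,5,5,5,5,5,4,4,4}] := by
    rw [map_degree_univ_eq_replicate_three_to_six hdeg, hn6]
    obtain ⟨h3, h4, h5⟩ | ⟨h3, h4, h5⟩ :
        (G.degreeCount 3 = 1 ∧ G.degreeCount 4 = 1 ∧ G.degreeCount 5 = 7) ∨
        (G.degreeCount 3 = 0 ∧ G.degreeCount 4 = 3 ∧ G.degreeCount 5 = 6) := by omega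
    all_goals rw [h3, h4, h5]; decide
  obtain h3 | ⟨h3, h5⟩ :
      G.degreeCount 3 = 0 ∨ (G.degreeCount 3 = 1 ∧ G.degreeCount 5 = 7) := by omega
  · obtain ⟨a, b, hab, hab10⟩ := heq
    have ha := hle5 a
    have hb := hle5 b
    have hnadj : ¬ G.Adj a b := fun h => by rw [if_pos h] at hab10; omega
    rw [if_neg hnadj] at hab10
    refine ⟨a, b, hab, by omega, by omega, hnadj, fun v hv _ => ?_, hseq⟩
    exact card_ne_zero_of_mem (mem_filter.mpr ⟨mem_univ v, hv⟩) h3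
  · obtain ⟨u, huF, huT⟩ := exists_mem_forall_not_adj_of_sum_degree_lt (G := G)
      (T := {v | G.degree v = 3}) (F := {v | G.degree v = 5}) (by
        rw [sum_const_nat fun t ht => (mem_filter.mp ht).2]
        change G.degreeCount 3 * 3 < G.degreeCount 5
        omega)
    obtain ⟨w, hwF, hwu⟩ := exists_mem_notMem_of_card_lt_card
      (s := insert u (G.neighborFinset u)) (t := {v | G.degree v = 5}) (by
        have := card_insert_le u (G.neighborFinset u)
        rw [card_neighborFinset_eq_degree, (mem_filter.mp huF).2] at this
        change _ < G.degreeCount 5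
        omega)
    rw [mem_insert, not_or, mem_neighborFinset] at hwu
    refine ⟨u, w, Ne.symm hwu.1, (mem_filter.mp huF).2, (mem_filter.mp hwF).2, hwu.2,
      fun v hv hvuw => huT v (mem_filter.mpr ⟨mem_univ v, hv⟩) hvuw.1, hseq⟩

end SimpleGraph

/-- Degree/structure lemma for graphs with 9 vertices, 21 edges, minimum degree at
least 3 such that every `G - {a',b'}` has at least 11 edges, with equality somewhere. -/
theorem stmt14 {V : Type*} [Fintype V] (G : SimpleGraph V)
    (hV : Fintype.card V = 9) (hE : G.edgeSet.ncard = 21)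
    (hmin : ∀ v : V, 3 ≤ (G.neighborSet v).ncard)
    (h11 : ∀ a' b' : V, a' ≠ b' →
      11 ≤ (G.induce (({a', b'} : Set V)ᶜ)).edgeSet.ncard)
    (heq : ∃ a' b' : V, a' ≠ b' ∧
      (G.induce (({a', b'} : Set V)ᶜ)).edgeSet.ncard = 11) :
    ∃ a b : V, a ≠ b ∧
      (G.induce (({a, b} : Set V)ᶜ)).edgeSet.ncard = 11 ∧
      (∀ v : (({a, b} : Set V)ᶜ : Set V),
        2 ≤ ((G.induce (({a, b} : Set V)ᶜ)).neighborSet v).ncard) ∧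
      (((G.neighborSet a).ncard = 6 ∧ (G.neighborSet b).ncard = 5 ∧
        (Finset.univ.val.map (fun v : V => (G.neighborSet v).ncard) ∈
          [({6,5,5,5,5,5,5,3,3} : Multiset ℕ),
           ({6,5,5,5,5,5,4,4,3} : Multiset ℕ),
           ({6,5,5,5,5,4,4,4,4} : Multiset ℕ)]) ∧
        (∀ v : V, (G.neighborSet v).ncard = 5 → G.Adj a v)) ∨
       ((G.neighborSet a).ncard = 5 ∧ (G.neighborSet b).ncard = 5 ∧ ¬ G.Adj a b ∧
        (Finset.univ.val.map (fun v : V => (G.neighborSet v).ncard) ∈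
          [({5,5,5,5,5,5,5,4,3} : Multiset ℕ),
           ({5,5,5,5,5,5,4,4,4} : Multiset ℕ)]))) := by
  classical
  simp only [ncard_neighborSet_eq_degree] at hmin ⊢
  rw [ncard_edgeSet_eq_card_edgeFinset] at hE
  have hcount {a b : V} (hab : a ≠ b) := ncard_edgeSet_induce_compl_pair_add (G := G) hab
  have hpair : ∀ a b, a ≠ b → G.degree a + G.degree b ≤ 10 + if G.Adj a b then 1 else 0 :=
    fun a b hab => by have := hcount hab; have := h11 a b hab; omega
  have hsum : ∑ v, G.degree v = 42 := by rw [sum_degrees_eq_twice_card_edges, hE]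
  have hdeg : ∀ v, G.degree v ∈ ({3, 4, 5, 6} : Finset ℕ) := fun v => by
    have hbound := card_sub_one_mul_degree_add_sum_degrees_le hpair v
    rw [hV, hsum] at hbound
    have := hmin v
    simp only [Finset.mem_insert, Finset.mem_singleton]
    omega
  by_cases h6 : ∃ a, G.degree a = 6
  · obtain ⟨a, ha⟩ := h6
    obtain ⟨b, hb, hab, h3, hseq⟩ := exists_adj_of_degree_eq_six hV hsum hdeg hpair ha
    refine ⟨a, b, hab.ne, ?_, two_le_degree_induce_compl_pair hab.ne hmin h3,
      Or.inl ⟨ha, hb, hseq, fun v => adj_of_degree_eq_six_of_degree_eq_five hpair ha⟩⟩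
    have := hcount hab.ne
    rw [if_pos hab] at this
    omega
  · obtain ⟨a, b, hab, ha, hb, hnadj, h3, hseq⟩ :=
      exists_not_adj_of_forall_degree_ne_six hV hsum hdeg (not_exists.mp h6) <| by
        obtain ⟨a', b', hab', h'⟩ := heq
        exact ⟨a', b', hab', by have := hcount hab'; omega⟩
    refine ⟨a, b, hab, ?_, two_le_degree_induce_compl_pair hab hmin h3,
      Or.inr ⟨ha, hb, hnadj, hseq⟩⟩
    have := hcount hab
    rw [if_neg hnadj] at this
    omega
end

section
/- Every non-planar finite simple graph with 6 vertices, 9 edges, and minimum degree at least 1 is isomorphic to the complete bipartite graph K3,3. -/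
namespace SimpleGraph

variable {W V : Type*} {H : SimpleGraph W} {G : SimpleGraph V}

/-- `π` contracts each branch set of the minor to its vertex of `H`. -/
theorem IsMinor.exists_surjective_edgeSet_subset_image [Nonempty W] (h : H.IsMinor G) :
    ∃ π : V → W, Function.Surjective π ∧ H.edgeSet ⊆ Sym2.map π '' G.edgeSet := by
  obtain ⟨f, hne, -, hdisj, hadj⟩ := h
  have hπ : ∀ w, ∀ v ∈ f w, Classical.epsilon (fun w => v ∈ f w) = w := fun w v hv =>
    hdisj.eq (Set.not_disjoint_iff.mpr
      ⟨v, Classical.epsilon_spec (p := fun w => v ∈ f w) ⟨w, hv⟩, hv⟩)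
  refine ⟨fun v => Classical.epsilon (fun w => v ∈ f w),
    fun w => ⟨_, hπ w _ (hne w).some_mem⟩, ?_⟩
  intro e he
  induction e using Sym2.ind with
  | _ w₁ w₂ =>
    obtain ⟨v₁, hv₁, v₂, hv₂, hG⟩ := hadj he
    exact ⟨s(v₁, v₂), hG, by rw [Sym2.map_mk, hπ w₁ v₁ hv₁, hπ w₂ v₂ hv₂]⟩

theorem IsMinor.ncard_edgeSet_le [Finite V] (h : H.IsMinor G) :
    H.edgeSet.ncard ≤ G.edgeSet.ncard := by
  cases isEmpty_or_nonempty W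
  · simp [Set.eq_empty_of_isEmpty H.edgeSet]
  obtain ⟨π, -, hsub⟩ := h.exists_surjective_edgeSet_subset_image
  exact (Set.ncard_le_ncard hsub (Set.toFinite _)).trans (Set.ncard_image_le (Set.toFinite _))

/-- With as many vertices as `G`, the contraction map is a bijection, and with as many edges it
carries `G` onto `H`. -/
theorem IsMinor.nonempty_iso_of_card_eq [Finite V] [Nonempty W] (h : H.IsMinor G)
    (hV : Nat.card V = Nat.card W) (hE : G.edgeSet.ncard = H.edgeSet.ncard) :
    Nonempty (G ≃g H) := by
  obtain ⟨π, hπ, hsub⟩ := h.exists_surjective_edgeSet_subset_image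
  have hbij : Function.Bijective π := hπ.bijective_of_nat_card_le hV.le
  have hmap : Sym2.map π '' G.edgeSet = H.edgeSet := by
    refine (Set.eq_of_subset_of_ncard_le hsub ?_ (Set.toFinite _)).symm
    rw [Set.ncard_image_of_injective _ (Sym2.map.injective hbij.1), hE]
  refine ⟨⟨Equiv.ofBijective π hbij, fun {a b} => ?_⟩⟩
  rw [← mem_edgeSet, ← hmap, Equiv.ofBijective_apply, Equiv.ofBijective_apply, ← Sym2.map_mk,
    (Sym2.map.injective hbij.1).mem_set_image, mem_edgeSet]

theorem ncard_edgeSet_top_fin_five : (⊤ : SimpleGraph (Fin 5)).edgeSet.ncard = 10 := by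
  rw [← coe_edgeFinset, Set.ncard_coe_finset, card_edgeFinset_top_eq_card_choose_two]
  rfl

theorem ncard_edgeSet_completeBipartiteGraph_fin_three :
    (completeBipartiteGraph (Fin 3) (Fin 3)).edgeSet.ncard = 9 := by
  simp [Set.ncard_def, encard_edgeSet_completeBipartiteGraph]

end SimpleGraph

theorem stmt15_general {V : Type*} [Fintype V] (G : SimpleGraph V)
    (hV : Fintype.card V = 6) (hE : G.edgeSet.ncard = 9)
    (hnp : ¬ G.IsPlanar) :
    Nonempty (G ≃g completeBipartiteGraph (Fin 3) (Fin 3)) := by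
  rw [SimpleGraph.IsPlanar, not_and_or, not_not, not_not] at hnp
  rcases hnp with hK5 | hK33
  · have := hK5.ncard_edgeSet_le
    rw [SimpleGraph.ncard_edgeSet_top_fin_five, hE] at this
    omega
  · exact hK33.nonempty_iso_of_card_eq (by simp [hV])
      (by rw [hE, SimpleGraph.ncard_edgeSet_completeBipartiteGraph_fin_three])

/-- Every non-planar graph with 6 vertices, 9 edges and minimum degree at least 1
is isomorphic to `K₃,₃`. -/
theorem stmt15 {V : Type*} [Fintype V] (G : SimpleGraph V)
    (hV : Fintype.card V = 6) (hE : G.edgeSet.ncard = 9)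
    (hmin : ∀ v : V, 1 ≤ (G.neighborSet v).ncard)
    (hnp : ¬ G.IsPlanar) :
    Nonempty (G ≃g completeBipartiteGraph (Fin 3) (Fin 3)) :=
  stmt15_general G hV hE hnp
end
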